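/- The bisimulation distance D_b(μ,ν) = inf{ε ≥ 0 : μ ∼_ε ν} is a pseudometric on Dist(S): D_b(μ,μ) = 0, D_b is symmetric, and D_b(μ,ν) + D_b(ν,ω) ≥ D_b(μ,ω). -/

import Mathlib

open Finset

structure ProbDist (S : Type) [Fintype S] where
  f : S → ℝ
  nonneg : ∀ s, 0 ≤ f s
  sum_one : ∑ s, f s = 1

/-- Probability assigned by a distribution to a set of states. -/
noncomputable def ProbDist.pr {S : Type} [Fintype S] (μ : ProbDist S) (C : Set S) : ℝ :=
  ∑ s, C.indicator μ.f s

/-- μ(A) := Σ_{s : L s = A} μ(s). -/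
noncomputable def pOf {S AP : Type} [Fintype S] (L : S → Finset AP) (μ : ProbDist S)
    (A : Finset AP) : ℝ :=
  μ.pr {s | L s = A}

/-- d_AP(μ,ν) := (1/2) Σ_{A ⊆ AP} |μ(A) − ν(A)|. -/
noncomputable def dAP {S AP : Type} [Fintype S] [Fintype AP] [DecidableEq AP]
    (L : S → Finset AP) (μ ν : ProbDist S) : ℝ :=
  (1 / 2) * ∑ A : Finset AP, |pOf L μ A - pOf L ν A|

/-- A (Segala) probabilistic automaton, image-finite. -/
structure PA (S Act AP : Type) [Fintype S] where
  trans : S → Act → ProbDist S → Prop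
  L : S → Finset AP
  imageFinite : ∀ s a, {μ | trans s a μ}.Finite

def PA.InputEnabled {S Act AP : Type} [Fintype S] (M : PA S Act AP) : Prop :=
  ∀ s a, ∃ μ, M.trans s a μ

noncomputable def PA.probOf {S Act AP : Type} [Fintype S] (M : PA S Act AP)
    (μ : ProbDist S) (A : Finset AP) : ℝ := pOf M.L μ A

/-- Combined transition s --a-->_P μ : μ is a convex combination of one-step successors. -/
def Combined {S Act AP : Type} [Fintype S] (M : PA S Act AP) (s : S) (a : Act)
    (μ : ProbDist S) : Prop :=
  ∃ (n : ℕ) (p : Fin n → ℝ) (ν : Fin n → ProbDist S),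
    (∀ i, 0 ≤ p i) ∧ (∑ i, p i = 1) ∧ (∀ i, M.trans s a (ν i)) ∧
    (∀ t, μ.f t = ∑ i, p i * (ν i).f t)

/-- Lifted transition μ --a--> μ' between distributions. -/
def Lifted {S Act AP : Type} [Fintype S] (M : PA S Act AP) (μ : ProbDist S) (a : Act)
    (μ' : ProbDist S) : Prop :=
  ∃ k : S → ProbDist S, (∀ s, 0 < μ.f s → Combined M s a (k s)) ∧
    (∀ t, μ'.f t = ∑ s, μ.f s * (k s).f t)

/-- ProbDist S carries the topology inherited from ℝ^{|S|}. -/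
noncomputable instance {S : Type} [Fintype S] : TopologicalSpace (ProbDist S) :=
  TopologicalSpace.induced (fun μ : ProbDist S => μ.f) inferInstance

/-- A (discounted) approximate bisimulation: a family of symmetric relations. -/
def IsApproxBisim {S Act AP : Type} [Fintype S] [Fintype AP] [DecidableEq AP]
    (M : PA S Act AP) (γ : ℝ) (R : ℝ → ProbDist S → ProbDist S → Prop) : Prop :=
  (∀ ε, Symmetric (R ε)) ∧ ∀ ε μ ν, R ε μ ν →
    dAP M.L μ ν ≤ ε ∧
    ∀ a μ', Lifted M μ a μ' → ∃ ν', Lifted M ν a ν' ∧ R (ε / γ) μ' ν'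

/-- μ ∼_ε ν. -/
def ApproxBisimilar {S Act AP : Type} [Fintype S] [Fintype AP] [DecidableEq AP]
    (M : PA S Act AP) (γ : ℝ) (ε : ℝ) (μ ν : ProbDist S) : Prop :=
  ∃ R, IsApproxBisim M γ R ∧ R ε μ ν

/-- The bisimulation distance D_b(μ,ν) = inf {ε ≥ 0 : μ ∼_ε ν}. -/
noncomputable def Db {S Act AP : Type} [Fintype S] [Fintype AP] [DecidableEq AP]
    (M : PA S Act AP) (γ : ℝ) (μ ν : ProbDist S) : ℝ :=
  sInf {ε | 0 ≤ ε ∧ ApproxBisimilar M γ ε μ ν}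


/-! The properties of `Db` are inherited from those of `∼_ε`: the diagonal relation witnesses
`μ ∼_0 μ`, symmetry is built into approximate bisimulations, and composing relations gives
`μ ∼_{ε₁} ν → ν ∼_{ε₂} ω → μ ∼_{ε₁+ε₂} ω`, because `(ε₁ + ε₂) / γ = ε₁ / γ + ε₂ / γ` keeps
the split compatible with the discount. For the triangle inequality the infima must be taken
over nonempty sets: with input-enabledness and `0 < γ ≤ 1` any two distributions are
`1`-bisimilar, since `d_AP ≤ 1` and `1 ≤ ε` implies `1 ≤ ε / γ`. -/

open scoped Pointwise

namespace ProbDist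

variable {S : Type} [Fintype S]

noncomputable def bind (μ : ProbDist S) (k : S → ProbDist S) : ProbDist S where
  f t := ∑ s, μ.f s * (k s).f t
  nonneg t := sum_nonneg fun s _ => mul_nonneg (μ.nonneg s) ((k s).nonneg t)
  sum_one := by
    rw [sum_comm]
    simp_rw [← mul_sum, (k _).sum_one, mul_one, μ.sum_one]

end ProbDist

section LabelDistance

variable {S AP : Type} [Fintype S]

lemma pOf_nonneg (L : S → Finset AP) (μ : ProbDist S) (A : Finset AP) : 0 ≤ pOf L μ A :=
  sum_nonneg fun s _ => Set.indicator_nonneg (fun t _ => μ.nonneg t) s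

variable [DecidableEq AP]

lemma pOf_eq_sum_filter (L : S → Finset AP) (μ : ProbDist S) (A : Finset AP) :
    pOf L μ A = ∑ s with L s = A, μ.f s := by
  simp only [pOf, ProbDist.pr, sum_filter, Set.indicator_apply, Set.mem_ofPred_eq]

variable [Fintype AP]

lemma sum_pOf (L : S → Finset AP) (μ : ProbDist S) : ∑ A, pOf L μ A = 1 := by
  simp_rw [pOf_eq_sum_filter]
  rw [sum_fiberwise, μ.sum_one]

lemma dAP_le_one (L : S → Finset AP) (μ ν : ProbDist S) : dAP L μ ν ≤ 1 := by
  have h : ∑ A, |pOf L μ A - pOf L ν A| ≤ ∑ A, (pOf L μ A + pOf L ν A) :=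
    sum_le_sum fun A _ => abs_sub_le_iff.2
      ⟨by linarith [pOf_nonneg L ν A], by linarith [pOf_nonneg L μ A]⟩
  rw [sum_add_distrib, sum_pOf, sum_pOf] at h
  rw [dAP]
  linarith

lemma dAP_self (L : S → Finset AP) (μ : ProbDist S) : dAP L μ μ = 0 := by
  simp [dAP]

lemma dAP_triangle (L : S → Finset AP) (μ ν ω : ProbDist S) :
    dAP L μ ω ≤ dAP L μ ν + dAP L ν ω := by
  simp only [dAP, ← mul_add, ← sum_add_distrib]
  gcongr with A
  exact abs_sub_le _ _ _

end LabelDistance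

section Transitions

variable {S Act AP : Type} [Fintype S] {M : PA S Act AP}

lemma Combined.of_trans {s : S} {a : Act} {μ : ProbDist S} (h : M.trans s a μ) :
    Combined M s a μ :=
  ⟨1, fun _ => 1, fun _ => μ, fun _ => zero_le_one, by simp, fun _ => h, fun t => by simp⟩

lemma PA.InputEnabled.exists_lifted (hM : M.InputEnabled) (μ : ProbDist S) (a : Act) :
    ∃ μ', Lifted M μ a μ' := by
  choose k hk using fun s => hM s a
  exact ⟨μ.bind k, k, fun s _ => .of_trans (hk s), fun t => rfl⟩

end Transitions

namespace ApproxBisimilar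

variable {S Act AP : Type} [Fintype S] [Fintype AP] [DecidableEq AP] {M : PA S Act AP}
  {γ ε ε₁ ε₂ : ℝ} {μ ν ω : ProbDist S}

lemma symm (h : ApproxBisimilar M γ ε μ ν) : ApproxBisimilar M γ ε ν μ :=
  let ⟨R, hR, hμν⟩ := h
  ⟨R, hR, hR.1 ε hμν⟩

lemma comm : ApproxBisimilar M γ ε μ ν ↔ ApproxBisimilar M γ ε ν μ :=
  ⟨symm, symm⟩

lemma dAP_le (h : ApproxBisimilar M γ ε μ ν) : dAP M.L μ ν ≤ ε :=
  let ⟨_, hR, hμν⟩ := h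
  (hR.2 ε μ ν hμν).1

lemma exists_lifted (h : ApproxBisimilar M γ ε μ ν) {a : Act} {μ' : ProbDist S}
    (hμ' : Lifted M μ a μ') : ∃ ν', Lifted M ν a ν' ∧ ApproxBisimilar M γ (ε / γ) μ' ν' :=
  let ⟨R, hR, hμν⟩ := h
  let ⟨ν', hν', hμν'⟩ := (hR.2 ε μ ν hμν).2 a μ' hμ'
  ⟨ν', hν', R, hR, hμν'⟩

lemma trans (h₁ : ApproxBisimilar M γ ε₁ μ ν) (h₂ : ApproxBisimilar M γ ε₂ ν ω) :
    ApproxBisimilar M γ (ε₁ + ε₂) μ ω := by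
  refine ⟨fun ε x z => ∃ δ₁ δ₂ y, δ₁ + δ₂ = ε ∧ ApproxBisimilar M γ δ₁ x y ∧
      ApproxBisimilar M γ δ₂ y z, ⟨?_, ?_⟩, ε₁, ε₂, ν, rfl, h₁, h₂⟩
  · rintro ε x z ⟨δ₁, δ₂, y, rfl, hxy, hyz⟩
    exact ⟨δ₂, δ₁, y, add_comm _ _, hyz.symm, hxy.symm⟩
  · rintro ε x z ⟨δ₁, δ₂, y, rfl, hxy, hyz⟩
    refine ⟨(dAP_triangle M.L x y z).trans (add_le_add hxy.dAP_le hyz.dAP_le), ?_⟩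
    intro a x' hx'
    obtain ⟨y', hy', hxy'⟩ := hxy.exists_lifted hx'
    obtain ⟨z', hz', hyz'⟩ := hyz.exists_lifted hy'
    exact ⟨z', hz', δ₁ / γ, δ₂ / γ, y', (add_div _ _ _).symm, hxy', hyz'⟩

end ApproxBisimilar

section Bisimilar

variable {S Act AP : Type} [Fintype S] [Fintype AP] [DecidableEq AP] {M : PA S Act AP} {γ : ℝ}

lemma approxBisimilar_zero_self (μ : ProbDist S) : ApproxBisimilar M γ 0 μ μ := by
  refine ⟨fun ε x y => x = y ∧ ε = 0, ⟨fun ε x y h => ⟨h.1.symm, h.2⟩, ?_⟩, rfl, rfl⟩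
  rintro ε x _ ⟨rfl, rfl⟩
  exact ⟨(dAP_self M.L x).le, fun a x' hx' => ⟨x', hx', rfl, zero_div γ⟩⟩

lemma approxBisimilar_one (hM : M.InputEnabled) (hγ0 : 0 < γ) (hγ1 : γ ≤ 1)
    (μ ν : ProbDist S) : ApproxBisimilar M γ 1 μ ν := by
  refine ⟨fun ε _ _ => 1 ≤ ε, ⟨fun ε x y h => h, ?_⟩, le_rfl⟩
  intro ε x y hε
  refine ⟨(dAP_le_one M.L x y).trans hε, fun a x' _ => ?_⟩
  obtain ⟨y', hy'⟩ := hM.exists_lifted y a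
  exact ⟨y', hy', hε.trans (le_div_self (zero_le_one.trans hε) hγ0 hγ1)⟩

lemma Db_self (μ : ProbDist S) : Db M γ μ μ = 0 :=
  le_antisymm (csInf_le ⟨0, fun _ h => h.1⟩ ⟨le_rfl, approxBisimilar_zero_self μ⟩)
    (Real.sInf_nonneg fun _ h => h.1)

lemma Db_comm (μ ν : ProbDist S) : Db M γ μ ν = Db M γ ν μ := by
  simp only [Db, ApproxBisimilar.comm (μ := μ)]

lemma Db_triangle (hM : M.InputEnabled) (hγ0 : 0 < γ) (hγ1 : γ ≤ 1) (μ ν ω : ProbDist S) :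
    Db M γ μ ω ≤ Db M γ μ ν + Db M γ ν ω := by
  have hne : ∀ μ ν : ProbDist S, {ε | 0 ≤ ε ∧ ApproxBisimilar M γ ε μ ν}.Nonempty :=
    fun μ ν => ⟨1, zero_le_one, approxBisimilar_one hM hγ0 hγ1 μ ν⟩
  have hbdd : ∀ μ ν : ProbDist S, BddBelow {ε | 0 ≤ ε ∧ ApproxBisimilar M γ ε μ ν} :=
    fun _ _ => ⟨0, fun _ h => h.1⟩
  rw [Db, Db, Db, ← csInf_add (hne μ ν) (hbdd μ ν) (hne ν ω) (hbdd ν ω)]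
  refine csInf_le_csInf (hbdd μ ω) ((hne μ ν).add (hne ν ω)) ?_
  rintro _ ⟨ε₁, ⟨hε₁, hμν⟩, ε₂, ⟨hε₂, hνω⟩, rfl⟩
  exact ⟨add_nonneg hε₁ hε₂, hμν.trans hνω⟩

end Bisimilar

theorem stmt11 {S Act AP : Type} [Fintype S] [Fintype AP] [DecidableEq AP]
    (M : PA S Act AP) (hM : M.InputEnabled) (γ : ℝ) (hγ0 : 0 < γ) (hγ1 : γ ≤ 1) :
    (∀ μ : ProbDist S, Db M γ μ μ = 0) ∧
    (∀ μ ν : ProbDist S, Db M γ μ ν = Db M γ ν μ) ∧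
    (∀ μ ν ω : ProbDist S, Db M γ μ ν + Db M γ ν ω ≥ Db M γ μ ω) :=
  ⟨Db_self, Db_comm, Db_triangle hM hγ0 hγ1⟩
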